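/- For Y ∈ ℝ let X(Y) denote the real 2×2 matrix with rows (0, −exp(Y/2)) and (exp(−Y/2), 0), let R be the 2×2 matrix with rows (1, 1) and (−1, 0), let L be the 2×2 matrix with rows (0, 1) and (−1, −1), and let φ(t) = log(1 + exp t). Then for all real numbers B, D, Z: X(D) · R · X(Z) · L · X(B) = X(D − φ(−Z)) · L · X(−Z) · R · X(B − φ(−Z)). -/

import Mathlib

open Matrix

/-- The edge matrix `X(Y)` of Fock's fat-graph description. -/
noncomputable def edgeMatrix (Y : ℝ) : Matrix (Fin 2) (Fin 2) ℝ :=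
  !![0, -Real.exp (Y / 2); Real.exp (-Y / 2), 0]

/-- The right-turn matrix `R`. -/
def rightTurn : Matrix (Fin 2) (Fin 2) ℝ := !![1, 1; -1, 0]

/-- The left-turn matrix `L`. -/
def leftTurn : Matrix (Fin 2) (Fin 2) ℝ := !![0, 1; -1, -1]

/-- `φ(t) = log(1 + exp t)`. -/
noncomputable def phiFlip (t : ℝ) : ℝ := Real.log (1 + Real.exp t)

/-- The second flip identity of Lemma 2.4:
`X(D)·R·X(Z)·L·X(B) = X(D − φ(−Z))·L·X(−Z)·R·X(B − φ(−Z))`. -/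
theorem flip_identity_RL (B D Z : ℝ) :
    edgeMatrix D * rightTurn * edgeMatrix Z * leftTurn * edgeMatrix B =
      edgeMatrix (D - phiFlip (-Z)) * leftTurn * edgeMatrix (-Z) * rightTurn *
        edgeMatrix (B - phiFlip (-Z)) := by
  have hpos : (0:ℝ) < 1 + Real.exp (-Z) := by positivity
  have he : Real.exp (Z/2) * Real.exp (Z/2) = Real.exp Z := by
    rw [← Real.exp_add]; ring_nf
  have hf2 : Real.exp (phiFlip (-Z)/2) * Real.exp (phiFlip (-Z)/2) *
      (Real.exp (Z/2) * Real.exp (Z/2)) = Real.exp (Z/2) * Real.exp (Z/2) + 1 := by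
    rw [he, ← Real.exp_add]
    have h2 : phiFlip (-Z) / 2 + phiFlip (-Z) / 2 = phiFlip (-Z) := by ring
    rw [h2, phiFlip, Real.exp_log hpos, Real.exp_neg]
    field_simp
  ext i j
  fin_cases i <;> fin_cases j <;>
    simp [edgeMatrix, rightTurn, leftTurn, Matrix.mul_apply, Fin.sum_univ_two,
        sub_div, neg_div, Real.exp_sub, Real.exp_add, Real.exp_neg] <;>
    field_simp <;>
    first
      | ring1
      | linear_combination (Real.exp (D/2) * Real.exp (B/2) *
          Real.exp (phiFlip (-Z)/2)) * hf2
      | linear_combination (-(Real.exp (D/2) * Real.exp (D/2) *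
          Real.exp (B/2))) * hf2
      | linear_combination hf2
      | linear_combination -hf2
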